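/- arXiv:2205.15245 — 4 statements merged into one kernel-verified Lean document; each statement's English description precedes it below -/
import Mathlib

section
/- Let N agents each have a finite nonempty action set A_i, individual action-value functions Q_i : A_i → ℝ, correction factors φ_i ∈ ℝ, and a joint action-value function Q_tot : A_1 × ⋯ × A_N → ℝ. Let ā = (ā_1,…,ā_N) be a joint action such that each ā_i maximizes Q_i over A_i. Suppose (i) ∑_{i=1}^{N} (Q_i(ā_i) + φ_i) − Q_tot(ā) = 0, and (ii) for every joint action a ≠ ā, ∑_{i=1}^{N} (Q_i(a_i) + φ_i) − Q_tot(a) ≥ 0. Then ā maximizes Q_tot, i.e., Q_tot(a) ≤ Q_tot(ā) for every joint action a. -/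
/-- Theorem 1 of the paper (RQN factorization condition implies IGM):
if each `abar i` maximizes `Q i`, the sum of corrected individual values
equals `Qtot` at `abar` and dominates `Qtot` elsewhere, then `abar`
maximizes `Qtot`. -/
theorem rqn_factorization_implies_igm
    (N : ℕ) (A : Fin N → Type*) [∀ i, Fintype (A i)] [∀ i, Nonempty (A i)]
    (Q : ∀ i, A i → ℝ) (φ : Fin N → ℝ)
    (Qtot : (∀ i, A i) → ℝ)
    (abar : ∀ i, A i)
    (hmax : ∀ i, ∀ a : A i, Q i a ≤ Q i (abar i))
    (heq : (∑ i, (Q i (abar i) + φ i)) - Qtot abar = 0)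
    (hge : ∀ a : ∀ i, A i, a ≠ abar → (∑ i, (Q i (a i) + φ i)) - Qtot a ≥ 0) :
    ∀ a : ∀ i, A i, Qtot a ≤ Qtot abar := by
  intro a
  by_cases h : a = abar
  · simp [h]
  · have h1 := hge a h
    have h2 : (∑ i, (Q i (a i) + φ i)) ≤ ∑ i, (Q i (abar i) + φ i) :=
      Finset.sum_le_sum fun i _ => by linarith [hmax i (a i)]
    linarith
end

section
/- Under the hypotheses of the RQN factorization condition — namely each ā_i maximizes Q_i over A_i, ∑_{i=1}^{N} (Q_i(ā_i) + φ_i) = Q_tot(ā), and ∑_{i=1}^{N} (Q_i(a_i) + φ_i) ≥ Q_tot(a) for every joint action a ≠ ā — the maximum of Q_tot over all joint actions equals Q_tot(ā), which equals ∑_{i=1}^{N} Q_i(ā_i) + ∑_{i=1}^{N} φ_i. -/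
/-! The factored value `∑ i, (Q i (a i) + φ i)` is maximised at `abar`, since each summand is, and
it dominates `Qtot` away from `abar` while agreeing with it at `abar`; so `Qtot a ≤ Qtot abar` for
every joint action `a`, and the supremum is attained at `abar`. -/

theorem sum_add_le_sum_add_of_forall_le {ι : Type*} [Fintype ι] {A : ι → Type*}
    (Q : ∀ i, A i → ℝ) (φ : ι → ℝ) {abar : ∀ i, A i}
    (hmax : ∀ i, ∀ a : A i, Q i a ≤ Q i (abar i)) (a : ∀ i, A i) :
    ∑ i, (Q i (a i) + φ i) ≤ ∑ i, (Q i (abar i) + φ i) :=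
  Finset.sum_le_sum fun i _ => add_le_add_left (hmax i (a i)) (φ i)

theorem le_apply_of_factorization {ι : Type*} [Fintype ι] {A : ι → Type*}
    {Q : ∀ i, A i → ℝ} {φ : ι → ℝ} {Qtot : (∀ i, A i) → ℝ} {abar : ∀ i, A i}
    (hmax : ∀ i, ∀ a : A i, Q i a ≤ Q i (abar i))
    (heq : (∑ i, (Q i (abar i) + φ i)) = Qtot abar)
    (hge : ∀ a : ∀ i, A i, a ≠ abar → (∑ i, (Q i (a i) + φ i)) ≥ Qtot a) (a : ∀ i, A i) :
    Qtot a ≤ Qtot abar := by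
  rcases eq_or_ne a abar with rfl | hne
  · exact le_rfl
  · calc Qtot a ≤ ∑ i, (Q i (a i) + φ i) := hge a hne
      _ ≤ ∑ i, (Q i (abar i) + φ i) := sum_add_le_sum_add_of_forall_le Q φ hmax a
      _ = Qtot abar := heq

theorem ciSup_eq_of_forall_le_apply {α : Type*} {f : α → ℝ} {x : α} (h : ∀ a, f a ≤ f x) :
    ⨆ a, f a = f x :=
  have : Nonempty α := ⟨x⟩
  le_antisymm (ciSup_le h) (le_ciSup ⟨f x, Set.forall_mem_range.2 h⟩ x)

theorem rqn_max_value_general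
    (N : ℕ) (A : Fin N → Type*)
    (Q : ∀ i, A i → ℝ) (φ : Fin N → ℝ)
    (Qtot : (∀ i, A i) → ℝ)
    (abar : ∀ i, A i)
    (hmax : ∀ i, ∀ a : A i, Q i a ≤ Q i (abar i))
    (heq : (∑ i, (Q i (abar i) + φ i)) = Qtot abar)
    (hge : ∀ a : ∀ i, A i, a ≠ abar → (∑ i, (Q i (a i) + φ i)) ≥ Qtot a) :
    (⨆ a : ∀ i, A i, Qtot a) = Qtot abar ∧
      Qtot abar = (∑ i, Q i (abar i)) + ∑ i, φ i :=
  ⟨ciSup_eq_of_forall_le_apply (le_apply_of_factorization hmax heq hge),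
    by rw [← heq, Finset.sum_add_distrib]⟩

/-- Under the RQN factorization condition, the maximum of `Qtot` over all
joint actions equals `Qtot abar`, which equals `∑ i, Q i (abar i) + ∑ i, φ i`. -/
theorem rqn_max_value
    (N : ℕ) (A : Fin N → Type*) [∀ i, Fintype (A i)] [∀ i, Nonempty (A i)]
    (Q : ∀ i, A i → ℝ) (φ : Fin N → ℝ)
    (Qtot : (∀ i, A i) → ℝ)
    (abar : ∀ i, A i)
    (hmax : ∀ i, ∀ a : A i, Q i a ≤ Q i (abar i))
    (heq : (∑ i, (Q i (abar i) + φ i)) = Qtot abar)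
    (hge : ∀ a : ∀ i, A i, a ≠ abar → (∑ i, (Q i (a i) + φ i)) ≥ Qtot a) :
    (⨆ a : ∀ i, A i, Qtot a) = Qtot abar ∧
      Qtot abar = (∑ i, Q i (abar i)) + ∑ i, φ i :=
  rqn_max_value_general N A Q φ Qtot abar hmax heq hge
end

section
/- Let N agents each have a finite nonempty action set A_i, individual action-value functions Q_i : A_i → ℝ, a joint action-value function Q_jt : A_1 × ⋯ × A_N → ℝ, and a constant V ∈ ℝ. Let ā = (ā_1,…,ā_N) be a joint action such that each ā_i maximizes Q_i over A_i. Suppose (i) ∑_{i=1}^{N} Q_i(ā_i) − Q_jt(ā) + V = 0, and (ii) for every joint action a ≠ ā, ∑_{i=1}^{N} Q_i(a_i) − Q_jt(a) + V ≥ 0. Then ā maximizes Q_jt, i.e., Q_jt(a) ≤ Q_jt(ā) for every joint action a. -/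
/-- QTRAN sufficient condition for factorization: if the additive sum of
individual Q-values corrected by a single constant `V` matches `Qjt` at the
locally optimal joint action and dominates it elsewhere, then the locally
optimal joint action maximizes `Qjt`. -/
theorem qtran_condition_implies_igm
    (N : ℕ) (A : Fin N → Type*) [∀ i, Fintype (A i)] [∀ i, Nonempty (A i)]
    (Q : ∀ i, A i → ℝ)
    (Qjt : (∀ i, A i) → ℝ) (V : ℝ)
    (abar : ∀ i, A i)
    (hmax : ∀ i, ∀ a : A i, Q i a ≤ Q i (abar i))
    (heq : (∑ i, Q i (abar i)) - Qjt abar + V = 0)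
    (hge : ∀ a : ∀ i, A i, a ≠ abar → (∑ i, Q i (a i)) - Qjt a + V ≥ 0) :
    ∀ a : ∀ i, A i, Qjt a ≤ Qjt abar := by
  intro a
  by_cases h : a = abar
  · subst h; exact le_refl _
  · have h1 := hge a h
    have h2 : (∑ i, Q i (a i)) ≤ ∑ i, Q i (abar i) :=
      Finset.sum_le_sum fun i _ => hmax i (a i)
    linarith
end

section
/- Define the payoff matrix M : {0,1,2} × {0,1,2} → ℝ by M(0,0) = 8, M(0,1) = M(0,2) = M(1,0) = M(2,0) = −12, and M(i,j) = 0 otherwise. Then there do not exist functions q_1, q_2 : {0,1,2} → ℝ and a mixing function f : ℝ × ℝ → ℝ that is monotone non-decreasing in each argument such that f(q_1(i), q_2(j)) = M(i,j) for all i, j ∈ {0,1,2}; i.e., M admits no monotonic (QMIX-style) factorization. -/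
/-- The payoff matrix of the one-step matrix game (Table I):
`M 0 0 = 8`, `M 0 1 = M 0 2 = M 1 0 = M 2 0 = -12`, and `0` otherwise. -/
def payoffMatrix : Fin 3 → Fin 3 → ℝ := fun i j =>
  if i = 0 ∧ j = 0 then 8
  else if i = 0 ∨ j = 0 then -12
  else 0

/-- The non-monotonic payoff matrix admits no monotonic (QMIX-style)
factorization `f (q₁ i) (q₂ j) = M i j` with `f` monotone non-decreasing in
each argument. -/
theorem no_monotonic_factorization :
    ¬ ∃ (q₁ q₂ : Fin 3 → ℝ) (f : ℝ → ℝ → ℝ),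
        (∀ x x' y : ℝ, x ≤ x' → f x y ≤ f x' y) ∧
        (∀ x y y' : ℝ, y ≤ y' → f x y ≤ f x y') ∧
        (∀ i j : Fin 3, f (q₁ i) (q₂ j) = payoffMatrix i j) := by
  rintro ⟨q₁, q₂, f, h₁, h₂, hf⟩
  have h00 := hf 0 0
  have h01 := hf 0 1
  have h10 := hf 1 0
  have h11 := hf 1 1
  simp [payoffMatrix] at h00 h01 h10 h11
  rcases le_total (q₁ 1) (q₁ 0) with h | h
  · have := h₁ (q₁ 1) (q₁ 0) (q₂ 1) h
    rw [h11, h01] at this; linarith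
  · have := h₁ (q₁ 0) (q₁ 1) (q₂ 0) h
    rw [h00, h10] at this; linarith
end
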